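/- arXiv:1809.07313 — 2 statements merged into one kernel-verified Lean document; each statement's English description precedes it below -/
import Mathlib

section
/- For every finite simple graph G with at least one vertex and every natural number k, the independence number of the pebble configuration graph satisfies α(G[k]) ≤ C(k + θ(G) − 1, θ(G) − 1), where θ(G) is the clique cover number of G and C(·,·) denotes the binomial coefficient. -/
open Finset

/-- A configuration of `k` identical pebbles on the vertex set `V`. -/
def Config (V : Type*) [Fintype V] (k : ℕ) : Type _ :=
  {f : V → ℕ // ∑ v, f v = k}

/-- The pebble configuration graph `G[k]`: two distinct configurations are adjacent
iff there is a transport `m` moving each pebble along an edge of `G` or keeping it in place. -/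
def PebbleGraph {V : Type*} [Fintype V] (G : SimpleGraph V) (k : ℕ) :
    SimpleGraph (Config V k) where
  Adj f g := f ≠ g ∧ ∃ m : V → V → ℕ,
    (∀ u w, m u w ≠ 0 → u = w ∨ G.Adj u w) ∧
    (∀ u, ∑ w, m u w = f.1 u) ∧ (∀ u, ∑ w, m w u = g.1 u)
  symm := ⟨by
    rintro f g ⟨hne, m, h1, h2, h3⟩
    exact ⟨hne.symm, fun u w => m w u,
      fun u w h => (h1 w u h).imp Eq.symm fun h => h.symm, h3, h2⟩⟩
  loopless := ⟨fun f h => h.1 rfl⟩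

/-- The independence number of a graph: the supremum of sizes of finite sets of
pairwise non-adjacent vertices. -/
noncomputable def indepNum {W : Type*} (G : SimpleGraph W) : ℕ :=
  sSup {n | ∃ s : Finset W, (↑s : Set W).Pairwise (fun a b => ¬ G.Adj a b) ∧ s.card = n}

/-- The 5-cycle on vertices `Fin 5`, with `u` adjacent to `u + 1` (mod 5). -/
def C5 : SimpleGraph (Fin 5) where
  Adj u w := u ≠ w ∧ (w = u + 1 ∨ u = w + 1)
  symm := ⟨fun _ _ h => ⟨h.1.symm, h.2.symm⟩⟩
  loopless := ⟨fun _ h => h.1 rfl⟩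

/-- The clique cover number of a graph: the least `n` such that the vertex set can be
covered by `n` cliques. -/
noncomputable def cliqueCoverNum {V : Type*} [Fintype V] (G : SimpleGraph V) : ℕ :=
  sInf {n | ∃ P : Fin n → Set V, (∀ i, G.IsClique (P i)) ∧ ∀ v, ∃ i, v ∈ P i}

/-!
Fix a minimum clique cover and let `c v` be the index of a clique containing `v`. Two distinct
configurations with the same number of pebbles on each clique are adjacent in `G[k]`: pebbles can be
matched so that each one stays in its clique, and any move inside a clique is along an edge. Hence
an independent set of `G[k]` injects, through the clique counts, into the configurations of `k`
pebbles on `θ(G)` points, of which there are `C(k + θ(G) - 1, θ(G) - 1)` by stars and bars.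
-/

section Transport

variable {α β : Type*} [DecidableEq α]

lemma exists_eq_add_single_one {f : α → ℕ} {u : α} (hu : f u ≠ 0) :
    ∃ f' : α → ℕ, f = f' + Pi.single u 1 := by
  refine ⟨f - Pi.single u 1, funext fun v => ?_⟩
  by_cases hv : v = u
  · subst hv; simp only [Pi.add_apply, Pi.sub_apply, Pi.single_eq_same]; omega
  · simp [hv]

variable [Fintype α] [DecidableEq β]

lemma sum_fiber_add_single_one (c : α → β) (f : α → ℕ) (u : α) (i : β) :
    ∑ v with c v = i, (f + Pi.single u 1 : α → ℕ) v =
      ∑ v with c v = i, f v + if c u = i then 1 else 0 := by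
  simp [sum_add_distrib, sum_pi_single']

theorem exists_transport_of_sum_fiber_eq (c : α → β) {f g : α → ℕ}
    (hfg : ∀ i, ∑ v with c v = i, f v = ∑ v with c v = i, g v) :
    ∃ m : α → α → ℕ, (∀ u w, m u w ≠ 0 → c u = c w) ∧
      (∀ u, ∑ w, m u w = f u) ∧ (∀ w, ∑ u, m u w = g w) := by
  induction hN : ∑ v, f v generalizing f g with
  | zero =>
    have hf0 : f = 0 := funext fun v => sum_eq_zero_iff.mp hN v (mem_univ v)
    have hg0 : g = 0 := funext fun w => by
      have h := hfg (c w)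
      simp only [hf0, Pi.zero_apply, sum_const_zero] at h
      exact sum_eq_zero_iff.mp h.symm w (by simp)
    exact ⟨0, by simp, by simp [hf0], by simp [hg0]⟩
  | succ N ih =>
    obtain ⟨u, hu⟩ : ∃ u, f u ≠ 0 := by
      by_contra! h
      simp [h] at hN
    -- move a pebble from `u` to some `w` in its fibre where `g` is positive, recurse on the rest
    obtain ⟨w, hw, hcw⟩ : ∃ w, g w ≠ 0 ∧ c w = c u := by
      have h : ∑ v with c v = c u, g v ≠ 0 := by
        rw [← hfg]
        exact sum_eq_zero_iff.not.mpr fun h => hu (h u (by simp))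
      obtain ⟨w, hwu, hw⟩ := exists_ne_zero_of_sum_ne_zero h
      exact ⟨w, hw, (mem_filter.mp hwu).2⟩
    obtain ⟨f', rfl⟩ := exists_eq_add_single_one hu
    obtain ⟨g', rfl⟩ := exists_eq_add_single_one hw
    obtain ⟨m', hm'c, hm'f, hm'g⟩ := ih (f := f') (g := g')
      (fun i => by have h := hfg i; simp only [sum_fiber_add_single_one, hcw] at h; omega)
      (by simp [sum_add_distrib] at hN; omega)
    refine ⟨fun a b => m' a b + if a = u ∧ b = w then 1 else 0, fun a b h => ?_, fun a => ?_,
      fun b => ?_⟩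
    · by_cases hm : m' a b = 0
      · simp only [hm, zero_add, ne_eq, ite_eq_right_iff, Classical.not_imp] at h
        rw [h.1.1, h.1.2, hcw]
      · exact hm'c a b hm
    · by_cases ha : a = u <;> simp [sum_add_distrib, hm'f, ha]
    · by_cases hb : b = w <;> simp [sum_add_distrib, hm'g, hb]

end Transport

namespace Config

variable {V β : Type*} [Fintype V] [Fintype β] [DecidableEq β] {k : ℕ}

def push (c : V → β) (f : Config V k) : Config β k :=
  ⟨fun i => ∑ v with c v = i, f.1 v, by rw [sum_fiberwise]; exact f.2⟩

noncomputable instance : Fintype (Config β k) :=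
  Fintype.ofEquiv _ (Sym.equivNatSumOfFintype β k)

theorem card_eq_choose : Fintype.card (Config β k) = (Fintype.card β + k - 1).choose k := by
  rw [← Sym.card_sym_eq_choose]
  exact Fintype.card_congr (Sym.equivNatSumOfFintype β k).symm

end Config

theorem PebbleGraph.isClique_push_preimage {V β : Type*} [Fintype V] [Fintype β]
    [DecidableEq β] {G : SimpleGraph V} {k : ℕ} {c : V → β} (hc : ∀ i, G.IsClique (c ⁻¹' {i}))
    (x : Config β k) : (PebbleGraph G k).IsClique (Config.push c ⁻¹' {x}) := by
  classical
  intro f hf g hg hfg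
  have hfiber (i : β) : ∑ v with c v = i, f.1 v = ∑ v with c v = i, g.1 v :=
    congrArg (fun y : Config β k => y.1 i) (hf.trans hg.symm)
  obtain ⟨m, hm, hmf, hmg⟩ := exists_transport_of_sum_fiber_eq c hfiber
  refine ⟨hfg, m, fun u w huw => ?_, hmf, hmg⟩
  exact or_iff_not_imp_left.mpr fun hne => hc (c u) rfl (hm u w huw).symm hne

theorem indepNum_le_card_of_isClique_preimage {W X : Type*} [Fintype X] {G : SimpleGraph W}
    (φ : W → X) (hφ : ∀ x, G.IsClique (φ ⁻¹' {x})) : indepNum G ≤ Fintype.card X := by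
  refine csSup_le' ?_
  rintro _ ⟨s, hs, rfl⟩
  have hinj : Set.InjOn φ s := fun a ha b hb hab =>
    by_contra fun hne => hs ha hb hne (hφ (φ b) hab rfl hne)
  exact (card_le_card_of_injOn φ (fun _ _ => mem_univ _) hinj).trans_eq card_univ

theorem exists_isClique_preimage_cliqueCoverNum {V : Type*} [Fintype V] (G : SimpleGraph V) :
    ∃ c : V → Fin (cliqueCoverNum G), ∀ i, G.IsClique (c ⁻¹' {i}) := by
  have hne : {n | ∃ P : Fin n → Set V, (∀ i, G.IsClique (P i)) ∧ ∀ v, ∃ i, v ∈ P i}.Nonempty :=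
    ⟨Fintype.card V, fun i => {(Fintype.equivFin V).symm i}, fun _ => Set.pairwise_singleton _ _,
      fun v => ⟨Fintype.equivFin V v, by simp⟩⟩
  obtain ⟨P, hP, hcover⟩ := Nat.sInf_mem hne
  choose c hc using hcover
  exact ⟨c, fun i => (hP i).subset fun v hv => hv ▸ hc v⟩

-- An equality except when `n = 0 < k`, where the left side is `0` and the right side `1`.
theorem Nat.add_sub_one_choose_le (n k : ℕ) :
    (n + k - 1).choose k ≤ (k + n - 1).choose (n - 1) := by
  rcases n with _ | n
  · rcases k with _ | k
    · rfl
    · simp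
  · rw [show n + 1 + k - 1 = n + k by omega, show k + (n + 1) - 1 = n + k by omega,
      Nat.add_sub_cancel, Nat.choose_symm_add]

theorem alpha_pebble_le_choose_general {V : Type*} [Fintype V]
    (G : SimpleGraph V) (k : ℕ) :
    indepNum (PebbleGraph G k) ≤
      (k + cliqueCoverNum G - 1).choose (cliqueCoverNum G - 1) := by
  obtain ⟨c, hc⟩ := exists_isClique_preimage_cliqueCoverNum G
  calc indepNum (PebbleGraph G k)
      ≤ Fintype.card (Config (Fin (cliqueCoverNum G)) k) :=
        indepNum_le_card_of_isClique_preimage _ (PebbleGraph.isClique_push_preimage hc)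
    _ = (cliqueCoverNum G + k - 1).choose k := by rw [Config.card_eq_choose, Fintype.card_fin]
    _ ≤ _ := Nat.add_sub_one_choose_le _ _

/-- For every finite simple graph `G` with at least one vertex and every `k`,
`α(G[k]) ≤ C(k + θ(G) − 1, θ(G) − 1)` where `θ(G)` is the clique cover number. -/
theorem alpha_pebble_le_choose {V : Type*} [Fintype V] [Nonempty V]
    (G : SimpleGraph V) (k : ℕ) :
    indepNum (PebbleGraph G k) ≤
      (k + cliqueCoverNum G - 1).choose (cliqueCoverNum G - 1) :=
  alpha_pebble_le_choose_general G k
end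

section
/- Let C₅ be the 5-cycle with vertices v₁,…,v₅ and edges e_j = {v_j, v_{j+1}} (indices mod 5), let k be a natural number, and for each j let S_j be the set of edge configurations ψ of weight k with ψ(e_{j−1}) = ψ(e_{j+1}) = 0 (indices mod 5). Then for every vertex configuration f of weight k and every j ∈ {1,…,5}, the number of edge configurations in S_j adjacent to f equals f(v_{j+3}) + 1 (index mod 5); consequently Σ_{j=1}^{5} #{ψ ∈ S_j : ψ adjacent to f} = k + 5. -/
open Finset

/-- An edge configuration `ψ` (pebbles on the edges `e₀, …, e₄` of the 5-cycle, where
`e_j = {v_j, v_{j+1}}`) is adjacent to a vertex configuration `f` if every pebble of `f`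
can be moved to an adjacent edge so as to produce `ψ`. -/
def VEAdj (k : ℕ) (f ψ : Config (Fin 5) k) : Prop :=
  ∃ m : Fin 5 → Fin 5 → ℕ,
    (∀ v e, m v e ≠ 0 → v = e ∨ v = e + 1) ∧
    (∀ v, ∑ e, m v e = f.1 v) ∧
    (∀ e, ∑ v, m v e = ψ.1 e)

/-!
A transport from a vertex configuration `f` on the cycle is determined by the number `r v ≤ f v`
of pebbles that each vertex `v` moves to the edge `e_v`, the other `f v - r v` going to `e_{v-1}`;
it produces the edge configuration `e ↦ r e + (f (e + 1) - r (e + 1))`. Requiring `e_{j-1}` and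
`e_{j+1}` to be empty forces `r = f` at `v_j, v_{j+2}` and `r = 0` at `v_{j+1}, v_{j+4}`, so only
the share `a ≤ f v_{j+3}` of `v_{j+3}` is free, and it is read off as `ψ e_{j+3} = a + f v_{j+4}`.
Summing `f v_{j+3} + 1` over `j` gives `k + 5`.
-/

def transferred {n : ℕ} [NeZero n] (f r : Fin n → ℕ) (e : Fin n) : ℕ :=
  r e + (f (e + 1) - r (e + 1))

lemma sum_transferred {n : ℕ} [NeZero n] {f r : Fin n → ℕ} (hr : r ≤ f) :
    ∑ e, transferred f r e = ∑ v, f v := by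
  unfold transferred
  rw [sum_add_distrib,
    Fintype.sum_equiv (Equiv.addRight 1) (fun v => f (v + 1) - r (v + 1)) (fun v => f v - r v)
      fun _ => rfl,
    ← sum_add_distrib]
  exact sum_congr rfl fun v _ => Nat.add_sub_cancel' (hr v)

lemma sum_transport_row {m : Fin 5 → Fin 5 → ℕ} (hm : ∀ v e, m v e ≠ 0 → v = e ∨ v = e + 1)
    (v : Fin 5) : ∑ e, m v e = m v v + m v (v - 1) :=
  Fintype.sum_eq_add v (v - 1) (by decide +revert) fun e ⟨hv, hv1⟩ => by
    by_contra h
    rcases hm v e h with rfl | rfl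
    exacts [hv rfl, hv1 (add_sub_cancel_right e 1).symm]

lemma sum_transport_col {m : Fin 5 → Fin 5 → ℕ} (hm : ∀ v e, m v e ≠ 0 → v = e ∨ v = e + 1)
    (e : Fin 5) : ∑ v, m v e = m e e + m (e + 1) e :=
  Fintype.sum_eq_add e (e + 1) (by decide +revert) fun v ⟨he, he1⟩ => by
    by_contra h
    rcases hm v e h with rfl | rfl
    exacts [he rfl, he1 rfl]

lemma veAdj_iff {k : ℕ} {f ψ : Config (Fin 5) k} :
    VEAdj k f ψ ↔ ∃ r ≤ f.1, ψ.1 = transferred f.1 r := by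
  constructor
  · rintro ⟨m, hm, hrow, hcol⟩
    refine ⟨fun v => m v v, fun v => ?_, funext fun e => ?_⟩
    · rw [← hrow v]
      exact single_le_sum (fun _ _ => Nat.zero_le _) (mem_univ v)
    · have hrow' := hrow (e + 1)
      rw [sum_transport_row hm, add_sub_cancel_right] at hrow'
      rw [← hcol e, sum_transport_col hm, transferred]
      omega
  · rintro ⟨r, hr, hψ⟩
    set m : Fin 5 → Fin 5 → ℕ :=
      fun v e => if e = v then r v else if e = v - 1 then f.1 v - r v else 0
    have hm : ∀ v e, m v e ≠ 0 → v = e ∨ v = e + 1 := fun v e h => by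
      simp only [m] at h
      split_ifs at h with h₁ h₂
      exacts [Or.inl h₁.symm, Or.inr (by rw [h₂, sub_add_cancel]), absurd rfl h]
    refine ⟨m, hm, fun v => ?_, fun e => ?_⟩
    · rw [sum_transport_row hm]
      simp [m, hr v]
    · rw [sum_transport_col hm, hψ]
      simp [m, transferred]

lemma Fin5.eq_add_cases (j v : Fin 5) :
    v = j ∨ v = j + 1 ∨ v = j + 2 ∨ v = j + 3 ∨ v = j + 4 := by
  decide +revert

lemma Fin5.sub_one_eq_add_four (j : Fin 5) : j - 1 = j + 4 := by
  decide +revert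

def pinnedKeep (f : Fin 5 → ℕ) (j : Fin 5) (a : ℕ) : Fin 5 → ℕ := fun v =>
  if v = j then f j else if v = j + 2 then f (j + 2) else if v = j + 3 then a else 0

section
variable {f : Fin 5 → ℕ} {j : Fin 5} {a : ℕ}

lemma pinnedKeep_le (ha : a ≤ f (j + 3)) : pinnedKeep f j a ≤ f := by
  intro v
  unfold pinnedKeep
  split_ifs with h₁ h₂ h₃ <;> subst_vars <;> simp [ha]

lemma transferred_pinnedKeep_add_three :
    transferred f (pinnedKeep f j a) (j + 3) = a + f (j + 4) := by
  simp [transferred, pinnedKeep, add_assoc]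

lemma transferred_eq_zero_iff {r : Fin 5 → ℕ} (hr : r ≤ f) :
    transferred f r (j - 1) = 0 ∧ transferred f r (j + 1) = 0 ↔
      ∃ a ≤ f (j + 3), r = pinnedKeep f j a := by
  rw [Fin5.sub_one_eq_add_four]
  constructor
  · rintro ⟨hprev, hnext⟩
    simp only [transferred, add_assoc, show (4 + 1 : Fin 5) = 0 by rfl, add_zero,
      show (1 + 1 : Fin 5) = 2 by rfl, Nat.add_eq_zero_iff, Nat.sub_eq_zero_iff_le] at hprev hnext
    obtain ⟨h₄, h₀⟩ := hprev
    obtain ⟨h₁, h₂⟩ := hnext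
    replace h₀ := (hr j).antisymm h₀
    replace h₂ := (hr (j + 2)).antisymm h₂
    refine ⟨r (j + 3), hr _, funext fun v => ?_⟩
    rcases Fin5.eq_add_cases j v with rfl | rfl | rfl | rfl | rfl <;>
      simp [pinnedKeep, *]
  · rintro ⟨a, -, rfl⟩
    simp [transferred, pinnedKeep, add_assoc]

end

lemma vanishing_veAdj_iff {k : ℕ} {f ψ : Config (Fin 5) k} {j : Fin 5} :
    ψ.1 (j - 1) = 0 ∧ ψ.1 (j + 1) = 0 ∧ VEAdj k f ψ ↔
      ∃ a ≤ f.1 (j + 3), ψ.1 = transferred f.1 (pinnedKeep f.1 j a) := by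
  rw [veAdj_iff]
  constructor
  · rintro ⟨hprev, hnext, r, hr, hψ⟩
    rw [hψ] at hprev hnext ⊢
    obtain ⟨a, ha, rfl⟩ := (transferred_eq_zero_iff hr).1 ⟨hprev, hnext⟩
    exact ⟨a, ha, rfl⟩
  · rintro ⟨a, ha, hψ⟩
    rw [hψ]
    obtain ⟨hprev, hnext⟩ := (transferred_eq_zero_iff (pinnedKeep_le ha)).2 ⟨a, ha, rfl⟩
    exact ⟨hprev, hnext, _, pinnedKeep_le ha, rfl⟩

lemma ncard_vanishing_veAdj {k : ℕ} (f : Config (Fin 5) k) (j : Fin 5) :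
    {ψ : Config (Fin 5) k | ψ.1 (j - 1) = 0 ∧ ψ.1 (j + 1) = 0 ∧ VEAdj k f ψ}.ncard =
      f.1 (j + 3) + 1 := by
  simp_rw [vanishing_veAdj_iff]
  rw [← Nat.card_Iic, ← Set.ncard_coe_finset, coe_Iic]
  refine Set.ncard_congr (fun ψ _ => ψ.1 (j + 3) - f.1 (j + 4)) ?_ ?_ ?_
  · rintro ψ ⟨a, ha, hψ⟩
    simpa [hψ, transferred_pinnedKeep_add_three] using ha
  · rintro ψ ψ' ⟨a, -, hψ⟩ ⟨a', -, hψ'⟩ h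
    simp only [hψ, hψ', transferred_pinnedKeep_add_three, Nat.add_sub_cancel] at h
    exact Subtype.ext (by rw [hψ, hψ', h])
  · intro a ha
    refine ⟨⟨transferred f.1 (pinnedKeep f.1 j a), ?_⟩, ⟨a, ha, rfl⟩, ?_⟩
    · rw [sum_transferred (pinnedKeep_le ha), f.2]
    · simp [transferred_pinnedKeep_add_three]

/-- For each `j`, the number of edge configurations vanishing on `e_{j−1}` and `e_{j+1}`
that are adjacent to a given vertex configuration `f` of weight `k` equals
`f(v_{j+3}) + 1`; consequently, summing over `j` gives `k + 5`. -/
theorem card_edgeConfigs_adj (k : ℕ) (f : Config (Fin 5) k) :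
    (∀ j : Fin 5,
      {ψ : Config (Fin 5) k | ψ.1 (j - 1) = 0 ∧ ψ.1 (j + 1) = 0 ∧ VEAdj k f ψ}.ncard =
        f.1 (j + 3) + 1) ∧
    ∑ j : Fin 5,
      {ψ : Config (Fin 5) k | ψ.1 (j - 1) = 0 ∧ ψ.1 (j + 1) = 0 ∧ VEAdj k f ψ}.ncard =
        k + 5 := by
  refine ⟨ncard_vanishing_veAdj f, ?_⟩
  simp only [ncard_vanishing_veAdj, sum_add_distrib, sum_const, card_univ, Fintype.card_fin,
    smul_eq_mul, mul_one]
  rw [Fintype.sum_equiv (Equiv.addRight 3) (fun j => f.1 (j + 3)) f.1 fun _ => rfl, f.2]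
end
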